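/- arXiv:1506.01109 — 2 statements merged into one kernel-verified Lean document; each statement's English description precedes it below -/
import Mathlib

section
/- Let B̂(u,v) := (I + αA)^{-1}(curl(u − αΔu) × v), where A is the Stokes operator. Then for all u, v ∈ W, ⟨B̂(u,v), v⟩ = 0, and consequently ⟨B̂(u,v), w⟩ = −⟨B̂(u,w), v⟩ for all u, v, w ∈ W. -/
open MeasureTheory
noncomputable section

abbrev E2 : Type := EuclideanSpace ℝ (Fin 2)

/-- partial derivative in direction `i` of a scalar field. -/
def pder (i : Fin 2) (f : E2 → ℝ) (x : E2) : ℝ :=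
  fderiv ℝ f x (EuclideanSpace.single i 1)

/-- scalar curl of a 2D vector field: ∂₁u₂ − ∂₂u₁. -/
def curl2 (u : E2 → E2) (x : E2) : ℝ :=
  pder 0 (fun y => u y 1) x - pder 1 (fun y => u y 0) x

/-- divergence of a 2D vector field. -/
def div2 (u : E2 → E2) (x : E2) : ℝ :=
  pder 0 (fun y => u y 0) x + pder 1 (fun y => u y 1) x

/-- componentwise Laplacian of a 2D vector field. -/
def lap2 (u : E2 → E2) (x : E2) : E2 :=
  (WithLp.equiv 2 (Fin 2 → ℝ)).symm fun j =>
    pder 0 (fun y => pder 0 (fun z => u z j) y) x +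
    pder 1 (fun y => pder 1 (fun z => u z j) y) x

/-- 2D product of a scalar with a vector: c × v = (−c v₂, c v₁). -/
def crossSV (c : ℝ) (v : E2) : E2 :=
  (WithLp.equiv 2 (Fin 2 → ℝ)).symm ![-(c * v 1), c * v 0]

/-- squared L² norm of a vector field on O. -/
def l2Vec (O : Set E2) (u : E2 → E2) : ℝ := ∫ x in O, ‖u x‖ ^ 2

/-- L² inner product of two vector fields on O. -/
def l2Inner (O : Set E2) (u v : E2 → E2) : ℝ := ∫ x in O, (inner ℝ (u x) (v x) : ℝ)

/-- H¹₀ (Dirichlet) inner product ((u,v)) = ∫ ∇u·∇v. -/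
def H01Inner (O : Set E2) (u v : E2 → E2) : ℝ :=
  ∫ x in O, ∑ i : Fin 2, ∑ j : Fin 2,
    pder i (fun y => u y j) x * pder i (fun y => v y j) x

/-- squared L² norm of the gradient, ‖∇u‖²_{L²}. -/
def gradSq (O : Set E2) (u : E2 → E2) : ℝ := H01Inner O u u

/-- squared V-norm: ‖u‖_V² = |u|² + α‖∇u‖². -/
def VSq (α : ℝ) (O : Set E2) (u : E2 → E2) : ℝ := l2Vec O u + α * gradSq O u

/-- V inner product: (u,v)_V = (u,v) + α((u,v)). -/
def VInner (α : ℝ) (O : Set E2) (u v : E2 → E2) : ℝ :=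
  l2Inner O u v + α * H01Inner O u v

/-- squared L² norm of curl(u − αΔu). -/
def curlSq (α : ℝ) (O : Set E2) (u : E2 → E2) : ℝ :=
  ∫ x in O, (curl2 (fun y => u y - α • lap2 u y) x) ^ 2

/-- squared W-norm: ‖u‖_W² = ‖u‖_V² + |curl(u − αΔu)|². -/
def WSq (α : ℝ) (O : Set E2) (u : E2 → E2) : ℝ := VSq α O u + curlSq α O u

/-- squared H³ norm on O. -/
def H3Sq (O : Set E2) (u : E2 → E2) : ℝ :=
  ∫ x in O, ∑ k ∈ Finset.range 4, ‖iteratedFDeriv ℝ k u x‖ ^ 2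

/-- membership in V: (H¹-regular) divergence-free field vanishing on ∂O. -/
def memV (O : Set E2) (u : E2 → E2) : Prop :=
  ContDiff ℝ 1 u ∧ (∀ x ∈ O, div2 u x = 0) ∧ ∀ x ∈ frontier O, u x = 0

/-- membership in W: H³-regular divergence-free field vanishing on ∂O. -/
def memW (O : Set E2) (u : E2 → E2) : Prop :=
  ContDiff ℝ 3 u ∧ (∀ x ∈ O, div2 u x = 0) ∧ ∀ x ∈ frontier O, u x = 0

/-- the Navier–Stokes trilinear form b(u,v,w). -/
def bForm (O : Set E2) (u v w : E2 → E2) : ℝ :=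
  ∫ x in O, ∑ i : Fin 2, ∑ j : Fin 2, u x i * pder i (fun y => v y j) x * w x j

theorem inner_crossSV (c : ℝ) (a b : E2) :
    inner ℝ (crossSV c a) b = c * (a 0 * b 1 - a 1 * b 0) := by
  simp only [crossSV, PiLp.inner_apply, Fin.sum_univ_two, WithLp.equiv_symm_apply,
    Matrix.cons_val_zero, Matrix.cons_val_one, RCLike.inner_apply, conj_trivial]
  ring

theorem inner_crossSV_self (c : ℝ) (a : E2) : inner ℝ (crossSV c a) a = 0 := by
  rw [inner_crossSV]
  ring

theorem inner_crossSV_comm (c : ℝ) (a b : E2) :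
    inner ℝ (crossSV c a) b = -inner ℝ (crossSV c b) a := by
  rw [inner_crossSV, inner_crossSV]
  ring

theorem l2Inner_crossSV_self (O : Set E2) (c : E2 → ℝ) (v : E2 → E2) :
    l2Inner O (fun x => crossSV (c x) (v x)) v = 0 := by
  simp only [l2Inner, inner_crossSV_self, integral_zero]

theorem l2Inner_crossSV_comm (O : Set E2) (c : E2 → ℝ) (v w : E2 → E2) :
    l2Inner O (fun x => crossSV (c x) (v x)) w = -l2Inner O (fun x => crossSV (c x) (w x)) v := by
  simp only [l2Inner, ← integral_neg, inner_crossSV_comm (c _) (v _)]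

theorem memW.memV {O : Set E2} {u : E2 → E2} (hu : memW O u) : memV O u :=
  ⟨hu.1.of_le (by norm_num), hu.2⟩

theorem stmt5_general (O : Set E2)
    (α : ℝ)
    (R : (E2 → E2) → (E2 → E2))
    (hR : ∀ f : E2 → E2, ∀ φ : E2 → E2, memV O φ →
      VInner α O (R f) φ = l2Inner O f φ) :
    ∀ u v w : E2 → E2, memW O u → memW O v → memW O w →
      VInner α O (R fun x => crossSV (curl2 (fun y => u y - α • lap2 u y) x) (v x)) v = 0
      ∧ VInner α O (R fun x => crossSV (curl2 (fun y => u y - α • lap2 u y) x) (v x)) w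
        = - VInner α O (R fun x => crossSV (curl2 (fun y => u y - α • lap2 u y) x) (w x)) v := by
  intro u v w _ hv hw
  rw [hR _ _ hv.memV, hR _ _ hw.memV, hR _ _ hv.memV]
  exact ⟨l2Inner_crossSV_self O _ v, l2Inner_crossSV_comm O _ v w⟩

/-- with B̂(u,v) = (I+αA)⁻¹(curl(u − αΔu) × v), one has
⟨B̂(u,v), v⟩ = 0 and ⟨B̂(u,v), w⟩ = −⟨B̂(u,w), v⟩; here the duality pairing with
elements of W is realized by the V inner product, and the resolvent `R = (I+αA)⁻¹`
is characterized by ((I+αA)⁻¹f, φ)_V = (f, φ)_{L²} for φ ∈ V. -/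
theorem stmt5 (O : Set E2) (hO : IsOpen O) (hOb : Bornology.IsBounded O)
    (α : ℝ) (hα : 0 < α)
    (R : (E2 → E2) → (E2 → E2))
    (hR : ∀ f : E2 → E2, ∀ φ : E2 → E2, memV O φ →
      VInner α O (R f) φ = l2Inner O f φ) :
    ∀ u v w : E2 → E2, memW O u → memW O v → memW O w →
      VInner α O (R fun x => crossSV (curl2 (fun y => u y - α • lap2 u y) x) (v x)) v = 0
      ∧ VInner α O (R fun x => crossSV (curl2 (fun y => u y - α • lap2 u y) x) (v x)) w
        = - VInner α O (R fun x => crossSV (curl2 (fun y => u y - α • lap2 u y) x) (w x)) v :=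
  stmt5_general O α R hR
end
end

section
/- For u ∈ W divergence-free and vanishing on ∂O, curl(curl(u − αΔu) × u) = (u·∇)(curl(u − αΔu)) as distributions (using the 2D convention c × v = (−c v₂, c v₁) for scalars c). -/
open MeasureTheory
noncomputable section

lemma pder_contDiff {f : E2 → ℝ} (i : Fin 2) (hf : ContDiff ℝ (⊤ : ℕ∞) f) :
    ContDiff ℝ (⊤ : ℕ∞) (pder i f) :=
  (hf.fderiv_right (mod_cast le_top)).clm_apply contDiff_const

lemma pder_mul {f g : E2 → ℝ} (i : Fin 2) (x : E2) (hf : ContDiff ℝ (⊤ : ℕ∞) f) (hg : ContDiff ℝ (⊤ : ℕ∞) g) :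
    pder i (fun y => f y * g y) x = pder i f x * g x + f x * pder i g x := by
  unfold pder
  rw [fderiv_fun_mul (hf.differentiable (by simp) x) (hg.differentiable (by simp) x)]
  simp [add_comm, mul_comm]

lemma pder_neg (f : E2 → ℝ) (i : Fin 2) (x : E2) :
    pder i (fun y => -(f y)) x = -(pder i f x) := by
  unfold pder; rw [fderiv_fun_neg]; simp

lemma w_comp_contDiff {u : E2 → E2} (hu : ContDiff ℝ (⊤ : ℕ∞) u) (α : ℝ) (j : Fin 2) :
    ContDiff ℝ (⊤ : ℕ∞) (fun z => (u z - α • lap2 u z) j) := by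
  have h : (fun z => (u z - α • lap2 u z) j) = fun z => u z j -
      α * (pder 0 (fun y => pder 0 (fun z => u z j) y) z +
           pder 1 (fun y => pder 1 (fun z => u z j) y) z) := rfl
  rw [h]
  have hj : ContDiff ℝ (⊤ : ℕ∞) (fun z => u z j) := contDiff_euclidean.mp hu j
  exact (contDiff_euclidean.mp hu j).sub (contDiff_const.mul
    (((pder_contDiff 0 (pder_contDiff 0 hj))).add ((pder_contDiff 1 (pder_contDiff 1 hj)))))

lemma q_contDiff {u : E2 → E2} (hu : ContDiff ℝ (⊤ : ℕ∞) u) (α : ℝ) :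
    ContDiff ℝ (⊤ : ℕ∞) (fun y => curl2 (fun z => u z - α • lap2 u z) y) :=
  (pder_contDiff 0 (w_comp_contDiff hu α 1)).sub (pder_contDiff 1 (w_comp_contDiff hu α 0))

/-- curl(curl(u − αΔu) × u) = (u·∇)(curl(u − αΔu)) on O. -/
theorem stmt9 (O : Set E2) (hO : IsOpen O) (hOb : Bornology.IsBounded O)
    (α : ℝ) (hα : 0 < α) (u : E2 → E2) (hu : ContDiff ℝ (⊤ : ℕ∞) u)
    (hdiv : ∀ x ∈ O, div2 u x = 0) (hbd : ∀ x ∈ frontier O, u x = 0) :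
    ∀ x ∈ O,
      curl2 (fun y => crossSV (curl2 (fun z => u z - α • lap2 u z) y) (u y)) x
        = u x 0 * pder 0 (fun y => curl2 (fun z => u z - α • lap2 u z) y) x
          + u x 1 * pder 1 (fun y => curl2 (fun z => u z - α • lap2 u z) y) x := by
  intro x hx
  set q : E2 → ℝ := fun y => curl2 (fun z => u z - α • lap2 u z) y with hq
  have hqc : ContDiff ℝ (⊤ : ℕ∞) q := q_contDiff hu α
  have hu0 : ContDiff ℝ (⊤ : ℕ∞) (fun y => u y 0) := contDiff_euclidean.mp hu 0
  have hu1 : ContDiff ℝ (⊤ : ℕ∞) (fun y => u y 1) := contDiff_euclidean.mp hu 1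
  have h1 : (fun y => crossSV (q y) (u y) 1) = fun y => q y * u y 0 := rfl
  have h0 : (fun y => crossSV (q y) (u y) 0) = fun y => -(q y * u y 1) := rfl
  have hdx := hdiv x hx
  unfold div2 at hdx
  show pder 0 (fun y => crossSV (q y) (u y) 1) x - pder 1 (fun y => crossSV (q y) (u y) 0) x = _
  rw [h1, h0, pder_neg (fun y => q y * u y 1) 1 x,
    pder_mul 0 x hqc hu0, pder_mul 1 x hqc hu1]
  linear_combination q x * hdx
end
end
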